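/- arXiv:2404.00652 — 3 statements merged into one kernel-verified Lean document; each statement's English description precedes it below -/
import Mathlib

section
/- Let f(t) = ∏_{i=1}^{g} (t² - b_i t + q) be a monic polynomial over a commutative ring Λ, where b_1,…,b_g, q ∈ Λ, and let h(t) = ∏_{i=1}^{g} (t - b_i). Then for any r ∈ Λ there exists a polynomial λ(t) ∈ Λ[t] such that f(t) = λ(t)·(t² - r t + q) + t^g · h(r). -/
open Polynomial

lemma aux_stmt0 {Λ : Type*} [CommRing Λ] {g : ℕ} (b : Fin g → Λ) (q r : Λ)
    (s : Finset (Fin g)) :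
    ∃ lam : Λ[X],
      (∏ i ∈ s, (X ^ 2 - C (b i) * X + C q)) =
        lam * (X ^ 2 - C r * X + C q) + X ^ s.card * C (∏ i ∈ s, (r - b i)) := by
  classical
  induction s using Finset.cons_induction with
  | empty => exact ⟨0, by simp⟩
  | cons a s ha ih =>
    obtain ⟨lam, hl⟩ := ih
    refine ⟨lam * (X ^ 2 - C (b a) * X + C q) + X ^ s.card * C (∏ i ∈ s, (r - b i)), ?_⟩
    rw [Finset.prod_cons, Finset.prod_cons, hl, Finset.card_cons]
    have : (X ^ 2 - C (b a) * X + C q : Λ[X]) =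
        (X ^ 2 - C r * X + C q) + C (r - b a) * X := by ring_nf; simp [C_sub]; ring
    rw [this]
    push_cast [C_mul]
    ring

/-- Lemma (hb_lemma): for `f(t) = ∏ (t² - bᵢ t + q)` and `h(t) = ∏ (t - bᵢ)` over a
commutative ring `Λ`, for any `r ∈ Λ` there is `λ(t)` with
`f(t) = λ(t)(t² - r t + q) + t^g h(r)`. -/
theorem stmt0 {Λ : Type*} [CommRing Λ] (g : ℕ) (hg : 1 ≤ g) (b : Fin g → Λ) (q r : Λ) :
    ∃ lam : Λ[X],
      (∏ i, (X ^ 2 - C (b i) * X + C q)) =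
        lam * (X ^ 2 - C r * X + C q) + X ^ g * C ((∏ i, (X - C (b i))).eval r) := by
  obtain ⟨lam, hl⟩ := aux_stmt0 b q r Finset.univ
  refine ⟨lam, ?_⟩
  simpa [eval_prod] using hl
end

section
/- Let ℓ be a prime and f(t) = g(t)^r + ℓ·α(t) ∈ ℤ_ℓ[t], where g(t) ∈ ℤ_ℓ[t] is monic and irreducible modulo ℓ, r ≥ 1, and α(t) ∈ ℤ_ℓ[t] with deg α < deg f. If r > 1 and the reductions of α(t) and g(t) modulo ℓ are coprime in 𝔽_ℓ[t], then the ring ℤ_ℓ[t]/(f(t)) is a discrete valuation ring (in particular, integrally closed). -/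
open Polynomial

lemma aux_finite {R : Type*} [CommRing R] (q : R[X]) (hq : q.Monic) (I : Ideal R[X])
    (hqI : q ∈ I) : Module.Finite R (R[X] ⧸ I) := by
  haveI h1 : Module.Finite R (AdjoinRoot q) := (AdjoinRoot.powerBasis' hq).finite
  have hle : Ideal.span {q} ≤ I := by rwa [Ideal.span_le, Set.singleton_subset_iff]
  let φ : AdjoinRoot q →ₐ[R] R[X] ⧸ I :=
    Ideal.Quotient.liftₐ (Ideal.span {q}) (Ideal.Quotient.mkₐ R I)
      (fun a ha => by
        rw [Ideal.Quotient.mkₐ_eq_mk, Ideal.Quotient.eq_zero_iff_mem]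
        exact hle ha)
  have hsurj : Function.Surjective φ := by
    intro x
    obtain ⟨y, rfl⟩ := Ideal.Quotient.mk_surjective x
    exact ⟨Ideal.Quotient.mk (Ideal.span {q}) y, by
      show Ideal.Quotient.liftₐ _ _ _ _ = _
      rw [Ideal.Quotient.liftₐ_apply]; rfl⟩
  exact Module.Finite.of_surjective φ.toLinearMap hsurj

set_option maxHeartbeats 1000000 in
/-- Dedekind criterion (special case): if `f = g^r + ℓ α ∈ ℤ_ℓ[t]` with `g` monic and
irreducible mod `ℓ`, `r > 1`, `deg α < deg f`, and the reductions of `α` and `g` mod `ℓ`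
coprime, then `ℤ_ℓ[t]/(f)` is a discrete valuation ring. -/
theorem stmt4 (ℓ : ℕ) [Fact ℓ.Prime] (f g α : Polynomial ℤ_[ℓ]) (r : ℕ)
    (hg : g.Monic) (hf : f = g ^ r + C (ℓ : ℤ_[ℓ]) * α)
    (hgirr : Irreducible (g.map (PadicInt.toZMod (p := ℓ))))
    (hr : 1 < r) (hdeg : α.degree < f.degree)
    (hcop : IsCoprime (α.map (PadicInt.toZMod (p := ℓ))) (g.map (PadicInt.toZMod (p := ℓ)))) :
    ∃ hdom : IsDomain (Polynomial ℤ_[ℓ] ⧸ Ideal.span {f}),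
      @IsDiscreteValuationRing (Polynomial ℤ_[ℓ] ⧸ Ideal.span {f}) _ hdom := by
  classical
  have hp : ℓ.Prime := Fact.out
  set π := PadicInt.toZMod (p := ℓ) with hπdef
  set φ := Polynomial.mapRingHom π with hφdef
  have hℓ0 : (ℓ : ℤ_[ℓ]) ≠ 0 := Nat.cast_ne_zero.mpr hp.ne_zero
  -- surjectivity of reduction
  have hπsurj : Function.Surjective π := by
    intro x
    refine ⟨((x.val : ℕ) : ℤ_[ℓ]), ?_⟩
    rw [hπdef, map_natCast, ZMod.natCast_val, ZMod.cast_id]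
  have hφsurj : Function.Surjective φ := Polynomial.map_surjective π hπsurj
  have hkerφ : RingHom.ker φ = Ideal.span {C (ℓ : ℤ_[ℓ])} := by
    rw [hφdef, Polynomial.ker_mapRingHom, PadicInt.ker_toZMod,
      PadicInt.maximalIdeal_eq_span_p, Ideal.map_span, Set.image_singleton]
  -- the ideal I = (f, g)
  set I : Ideal (Polynomial ℤ_[ℓ]) := Ideal.span {f, g} with hIdef
  have hfI : f ∈ I := Ideal.subset_span (by simp)
  have hgI : g ∈ I := Ideal.subset_span (by simp)
  have hℓα : C (ℓ : ℤ_[ℓ]) * α ∈ I := by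
    have he : C (ℓ : ℤ_[ℓ]) * α = f - g ^ r := by rw [hf]; ring
    rw [he]
    exact I.sub_mem hfI (Ideal.pow_mem_of_mem I hgI r (by omega))
  -- lift the coprimality
  obtain ⟨u', v', huv⟩ := hcop
  obtain ⟨u, hu⟩ := hφsurj u'
  obtain ⟨v, hv⟩ := hφsurj v'
  have hker : u * α + v * g - 1 ∈ RingHom.ker φ := by
    rw [RingHom.mem_ker, map_sub, map_add, map_mul, map_mul, map_one, hu, hv]
    show u' * α.map π + v' * g.map π - 1 = 0
    rw [huv, sub_self]
  rw [hkerφ, Ideal.mem_span_singleton] at hker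
  obtain ⟨w, hw'⟩ := hker
  have hkey : C (ℓ : ℤ_[ℓ]) * C (ℓ : ℤ_[ℓ]) * w + C (ℓ : ℤ_[ℓ]) ∈ I := by
    have h1 : u * (C (ℓ : ℤ_[ℓ]) * α) + (v * C (ℓ : ℤ_[ℓ])) * g
        = C (ℓ : ℤ_[ℓ]) * C (ℓ : ℤ_[ℓ]) * w + C (ℓ : ℤ_[ℓ]) := by
      linear_combination C ((ℓ : ℤ_[ℓ])) * hw'
    rw [← h1]
    exact I.add_mem (I.mul_mem_left u hℓα) (I.mul_mem_left _ hgI)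
  -- Nakayama: C ℓ ∈ I
  haveI hTfin : Module.Finite ℤ_[ℓ] (Polynomial ℤ_[ℓ] ⧸ I) := aux_finite g hg I hgI
  have hCℓI : C (ℓ : ℤ_[ℓ]) ∈ I := by
    set T := Polynomial ℤ_[ℓ] ⧸ I with hTdef
    set mkI := Ideal.Quotient.mk I with hmkIdef
    have hc : mkI (C (ℓ : ℤ_[ℓ])) = -(mkI (C (ℓ : ℤ_[ℓ])) * mkI (C (ℓ : ℤ_[ℓ])) * mkI w) := by
      have h0 := Ideal.Quotient.eq_zero_iff_mem.mpr hkey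
      rw [map_add, map_mul, map_mul] at h0
      linear_combination h0
    have hsm : ∀ x : T, (ℓ : ℤ_[ℓ]) • x = mkI (C (ℓ : ℤ_[ℓ])) * x := by
      intro x
      have h : (ℓ : ℤ_[ℓ]) • x = algebraMap ℤ_[ℓ] (Polynomial ℤ_[ℓ] ⧸ I) (ℓ : ℤ_[ℓ]) * x :=
        Algebra.smul_def _ x
      rw [h, ← Ideal.Quotient.mk_algebraMap, Polynomial.algebraMap_eq]
    set J : Ideal ℤ_[ℓ] := Ideal.span {(ℓ : ℤ_[ℓ])} with hJdef
    set N : Submodule ℤ_[ℓ] T := J • ⊤ with hNdef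
    have hNle : N ≤ J • N := by
      rw [hNdef, Submodule.smul_le]
      rintro rr hrr m -
      rw [hJdef, Ideal.mem_span_singleton] at hrr
      obtain ⟨c, rfl⟩ := hrr
      have h2 : (ℓ : ℤ_[ℓ]) • ((-(mkI w * m)) : T) ∈ N :=
        Submodule.smul_mem_smul (Ideal.mem_span_singleton_self _) trivial
      have h3 : (ℓ : ℤ_[ℓ]) • ((ℓ : ℤ_[ℓ]) • ((-(mkI w * m)) : T)) ∈ J • N :=
        Submodule.smul_mem_smul (Ideal.mem_span_singleton_self _) h2
      have h4 : ((ℓ : ℤ_[ℓ]) * c) • m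
          = c • ((ℓ : ℤ_[ℓ]) • ((ℓ : ℤ_[ℓ]) • ((-(mkI w * m)) : T))) := by
        rw [mul_comm (ℓ : ℤ_[ℓ]) c, mul_smul, hsm, hsm, hsm]
        congr 1
        linear_combination m * hc
      rw [h4]
      exact Submodule.smul_mem _ c h3
    have hJjac : J ≤ Ideal.jacobson ⊥ := by
      rw [IsLocalRing.jacobson_eq_maximalIdeal ⊥ bot_ne_top, hJdef,
        ← PadicInt.maximalIdeal_eq_span_p]
    have hNbot : N = ⊥ :=
      Submodule.eq_bot_of_le_smul_of_le_jacobson_bot J N (IsNoetherian.noetherian N) hNle hJjac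
    have h5 : (ℓ : ℤ_[ℓ]) • (1 : T) ∈ N :=
      Submodule.smul_mem_smul (Ideal.mem_span_singleton_self _) trivial
    rw [hNbot, Submodule.mem_bot, hsm, mul_one] at h5
    exact Ideal.Quotient.eq_zero_iff_mem.mp h5
  -- ℓ vanishes in K[X]
  have hπℓ : π (ℓ : ℤ_[ℓ]) = 0 := by rw [map_natCast, ZMod.natCast_self]
  have hφCℓ : φ (C (ℓ : ℤ_[ℓ])) = 0 := by
    show (C (ℓ : ℤ_[ℓ])).map π = 0
    rw [map_C, hπℓ, map_zero]
  -- I is maximal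
  have hI2 : I = Ideal.comap φ (Ideal.span {g.map π}) := by
    apply le_antisymm
    · rw [hIdef, Ideal.span_le, Set.insert_subset_iff, Set.singleton_subset_iff]
      constructor
      · rw [SetLike.mem_coe, Ideal.mem_comap]
        have hφf : φ f = (g.map π) ^ r := by
          rw [hf, map_add, map_mul, hφCℓ, zero_mul, add_zero, map_pow]
          rfl
        rw [hφf]
        exact Ideal.pow_mem_of_mem _ (Ideal.mem_span_singleton_self _) r (by omega)
      · rw [SetLike.mem_coe, Ideal.mem_comap]
        show g.map π ∈ _
        exact Ideal.mem_span_singleton_self _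
    · intro x hx
      rw [Ideal.mem_comap, Ideal.mem_span_singleton] at hx
      obtain ⟨y, hy⟩ := hx
      obtain ⟨z, hz⟩ := hφsurj y
      have hxz : x - g * z ∈ RingHom.ker φ := by
        rw [RingHom.mem_ker, map_sub, map_mul, hy, hz]
        show (g.map π) * y - (g.map π) * y = 0
        ring
      rw [hkerφ, Ideal.mem_span_singleton] at hxz
      obtain ⟨e, he⟩ := hxz
      have : x = g * z + C (ℓ : ℤ_[ℓ]) * e := by linear_combination he
      rw [this]
      exact I.add_mem (I.mul_mem_right z hgI) (I.mul_mem_right e hCℓI)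
  haveI hspanmax : (Ideal.span {g.map π}).IsMaximal :=
    PrincipalIdealRing.isMaximal_of_irreducible hgirr
  have hImax : I.IsMaximal := by
    rw [hI2]
    exact Ideal.comap_isMaximal_of_surjective φ hφsurj
  -- f is monic and of positive degree
  have hdeg2 : (C (ℓ : ℤ_[ℓ]) * α).degree < (g ^ r).degree := by
    by_contra h
    push_neg at h
    have h1 : f.degree ≤ (C (ℓ : ℤ_[ℓ]) * α).degree := by
      rw [hf]
      exact le_trans (degree_add_le _ _) (max_le h le_rfl)
    have h2 : (C (ℓ : ℤ_[ℓ]) * α).degree ≤ α.degree := by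
      have h2' := degree_mul_le (C (ℓ : ℤ_[ℓ])) α
      rwa [degree_C hℓ0, zero_add] at h2'
    exact absurd (lt_of_le_of_lt (h1.trans h2) hdeg) (lt_irrefl _)
  have hfm : f.Monic := by
    rw [hf]
    exact (hg.pow r).add_of_left hdeg2
  have hgdeg : 0 < g.degree := by
    have h1 : (g.map π).degree = g.degree := hg.degree_map π
    rw [← h1]
    have := hgirr.natDegree_pos
    exact natDegree_pos_iff_degree_pos.mp this
  have hfdeg : 0 < f.degree := by
    have h3 : f.degree = (g ^ r).degree := by
      rw [hf]
      exact degree_add_eq_left_of_degree_lt hdeg2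
    rw [h3, degree_pow]
    exact nsmul_pos hgdeg (by omega)
  -- the quotient ring
  set mk0 := Ideal.Quotient.mk (Ideal.span {f}) with hmk0def
  have hspanfI : Ideal.span {f} ≤ I := by
    rw [Ideal.span_le, Set.singleton_subset_iff]; exact hfI
  have hmkf : mk0 f = 0 := Ideal.Quotient.eq_zero_iff_mem.mpr (Ideal.mem_span_singleton_self f)
  have hCℓn : ∀ n : ℕ, (C (ℓ : ℤ_[ℓ])) ^ n ∉ Ideal.span {f} := by
    intro n hn
    rw [Ideal.mem_span_singleton] at hn
    have h1 : f.degree ≤ ((C (ℓ : ℤ_[ℓ])) ^ n).degree := by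
      apply degree_le_of_dvd hn
      rw [← C_pow]
      exact fun h => (pow_ne_zero n hℓ0) (by rwa [C_eq_zero] at h)
    rw [← C_pow, degree_C (pow_ne_zero n hℓ0)] at h1
    exact absurd (lt_of_lt_of_le hfdeg h1) (lt_irrefl _)
  haveI hRfin : Module.Finite ℤ_[ℓ] (Polynomial ℤ_[ℓ] ⧸ Ideal.span {f}) :=
    aux_finite f hfm _ (Ideal.mem_span_singleton_self f)
  haveI hRnoeth : IsNoetherianRing (Polynomial ℤ_[ℓ] ⧸ Ideal.span {f}) :=
    isNoetherianRing_of_surjective _ _ mk0 Ideal.Quotient.mk_surjective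
  have halg : algebraMap ℤ_[ℓ] (Polynomial ℤ_[ℓ] ⧸ Ideal.span {f}) (ℓ : ℤ_[ℓ]) = mk0 (C (ℓ : ℤ_[ℓ])) := by
    rw [← Ideal.Quotient.mk_algebraMap, Polynomial.algebraMap_eq]
  -- the image of I is maximal
  have hmne : I.map mk0 ≠ ⊤ := by
    intro htop
    have h1 := congrArg (Ideal.comap mk0) htop
    rw [Ideal.comap_map_of_surjective mk0 Ideal.Quotient.mk_surjective, Ideal.comap_top] at h1
    have h2 : Ideal.comap mk0 ⊥ = Ideal.span {f} := by
      rw [← RingHom.ker_eq_comap_bot, hmk0def, Ideal.mk_ker]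
    rw [h2, sup_eq_left.mpr hspanfI] at h1
    exact hImax.ne_top h1
  have hmmax : (I.map mk0).IsMaximal :=
    (Ideal.map_eq_top_or_isMaximal_of_surjective mk0 Ideal.Quotient.mk_surjective hImax).resolve_left hmne
  -- the quotient is local
  haveI hloc : IsLocalRing (Polynomial ℤ_[ℓ] ⧸ Ideal.span {f}) := by
    refine IsLocalRing.of_unique_max_ideal ⟨I.map mk0, hmmax, ?_⟩
    intro M hM
    haveI := hM
    have hcM : (Ideal.comap (algebraMap ℤ_[ℓ] (Polynomial ℤ_[ℓ] ⧸ Ideal.span {f})) M).IsMaximal :=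
      Ideal.isMaximal_comap_of_isIntegral_of_isMaximal M
    have hcMeq := IsLocalRing.eq_maximalIdeal hcM
    have hℓM : mk0 (C (ℓ : ℤ_[ℓ])) ∈ M := by
      have h2 : (ℓ : ℤ_[ℓ]) ∈ Ideal.comap (algebraMap ℤ_[ℓ] (Polynomial ℤ_[ℓ] ⧸ Ideal.span {f})) M := by
        rw [hcMeq, PadicInt.maximalIdeal_eq_span_p]
        exact Ideal.mem_span_singleton_self _
      rw [Ideal.mem_comap, halg] at h2
      exact h2
    have hgM : mk0 g ∈ M := by
      have hpow : (mk0 g) ^ r ∈ M := by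
        have h3 : (mk0 g) ^ r = -(mk0 (C (ℓ : ℤ_[ℓ])) * mk0 α) := by
          rw [← map_pow]
          have h4 : g ^ r = f - C (ℓ : ℤ_[ℓ]) * α := by rw [hf]; ring
          rw [h4, map_sub, hmkf, zero_sub, map_mul]
        rw [h3]
        exact M.neg_mem (M.mul_mem_right _ hℓM)
      exact hM.isPrime.mem_of_pow_mem r hpow
    have hle : I.map mk0 ≤ M := by
      rw [Ideal.map_le_iff_le_comap, hIdef, Ideal.span_le, Set.insert_subset_iff,
        Set.singleton_subset_iff]
      refine ⟨?_, ?_⟩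
      · rw [SetLike.mem_coe, Ideal.mem_comap, hmkf]; exact M.zero_mem
      · rw [SetLike.mem_coe, Ideal.mem_comap]; exact hgM
    exact (hmmax.eq_of_le hM.ne_top hle).symm
  have hmg : I.map mk0 = Ideal.span {mk0 g} := by
    apply le_antisymm
    · rw [Ideal.map_le_iff_le_comap, hIdef, Ideal.span_le, Set.insert_subset_iff,
        Set.singleton_subset_iff]
      refine ⟨?_, ?_⟩
      · rw [SetLike.mem_coe, Ideal.mem_comap, hmkf]; exact Ideal.zero_mem _
      · rw [SetLike.mem_coe, Ideal.mem_comap]; exact Ideal.mem_span_singleton_self _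
    · rw [Ideal.span_le, Set.singleton_subset_iff]
      exact SetLike.mem_coe.mpr (Ideal.mem_map_of_mem mk0 hgI)
  have hmaxeq : IsLocalRing.maximalIdeal (Polynomial ℤ_[ℓ] ⧸ Ideal.span {f}) = Ideal.span {mk0 g} := by
    rw [← hmg]
    exact (IsLocalRing.eq_maximalIdeal hmmax).symm
  have hℓmkne : ∀ n : ℕ, (mk0 (C (ℓ : ℤ_[ℓ]))) ^ n ≠ 0 := by
    intro n h0
    rw [← map_pow, Ideal.Quotient.eq_zero_iff_mem] at h0
    exact hCℓn n h0
  have hgpowne : ∀ n : ℕ, (mk0 g) ^ n ≠ 0 := by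
    intro n h0
    have hℓm : mk0 (C (ℓ : ℤ_[ℓ])) ∈ Ideal.span {mk0 g} := by
      rw [← hmg]; exact Ideal.mem_map_of_mem mk0 hCℓI
    rw [Ideal.mem_span_singleton] at hℓm
    obtain ⟨e, he⟩ := hℓm
    apply hℓmkne n
    rw [he, mul_pow, h0, zero_mul]
  -- structure of nonzero elements
  have hbot := Ideal.iInf_pow_eq_bot_of_isLocalRing
    (IsLocalRing.maximalIdeal (Polynomial ℤ_[ℓ] ⧸ Ideal.span {f}))
    (Ideal.IsMaximal.ne_top (IsLocalRing.maximalIdeal.isMaximal _))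
  have hstruct : ∀ x : Polynomial ℤ_[ℓ] ⧸ Ideal.span {f}, x ≠ 0 →
      ∃ (n : ℕ) (c : Polynomial ℤ_[ℓ] ⧸ Ideal.span {f}), IsUnit c ∧ x = (mk0 g) ^ n * c := by
    intro x hx
    have hxn : ∃ n, x ∉ (IsLocalRing.maximalIdeal (Polynomial ℤ_[ℓ] ⧸ Ideal.span {f})) ^ n := by
      by_contra hcon
      push_neg at hcon
      apply hx
      have hxi : x ∈ ⨅ n : ℕ,
          (IsLocalRing.maximalIdeal (Polynomial ℤ_[ℓ] ⧸ Ideal.span {f})) ^ n :=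
        (Submodule.mem_iInf _).mpr hcon
      rw [hbot] at hxi
      simpa using hxi
    set n0 := Nat.find hxn with hn0def
    have hn0 : x ∉ (IsLocalRing.maximalIdeal (Polynomial ℤ_[ℓ] ⧸ Ideal.span {f})) ^ n0 :=
      Nat.find_spec hxn
    have hn0pos : 0 < n0 := by
      rcases Nat.eq_zero_or_pos n0 with h | h
      · exfalso; apply hn0; rw [h, pow_zero, Ideal.one_eq_top]; exact Submodule.mem_top
      · exact h
    have hmem : x ∈ (IsLocalRing.maximalIdeal (Polynomial ℤ_[ℓ] ⧸ Ideal.span {f})) ^ (n0 - 1) := by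
      by_contra hcon
      exact Nat.find_min hxn (Nat.sub_lt hn0pos one_pos) hcon
    rw [hmaxeq, Ideal.span_singleton_pow, Ideal.mem_span_singleton] at hmem
    obtain ⟨c, hc⟩ := hmem
    refine ⟨n0 - 1, c, ?_, hc⟩
    by_contra hcu
    have hcm : c ∈ IsLocalRing.maximalIdeal (Polynomial ℤ_[ℓ] ⧸ Ideal.span {f}) := hcu
    rw [hmaxeq, Ideal.mem_span_singleton] at hcm
    obtain ⟨d, hd⟩ := hcm
    apply hn0
    have hx2 : x = (mk0 g) ^ n0 * d := by
      calc x = (mk0 g) ^ (n0 - 1) * (mk0 g * d) := by rw [hc, hd]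
      _ = (mk0 g) ^ (n0 - 1 + 1) * d := by ring
      _ = (mk0 g) ^ n0 * d := by rw [Nat.sub_add_cancel hn0pos]
    rw [hmaxeq, Ideal.span_singleton_pow, Ideal.mem_span_singleton]
    exact ⟨d, hx2⟩
  -- domain
  haveI hnontriv : Nontrivial (Polynomial ℤ_[ℓ] ⧸ Ideal.span {f}) := by
    apply Ideal.Quotient.nontrivial_iff.mpr
    intro htop
    exact hImax.ne_top (eq_top_iff.mpr (htop ▸ hspanfI))
  haveI hnzd : NoZeroDivisors (Polynomial ℤ_[ℓ] ⧸ Ideal.span {f}) := by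
    constructor
    intro a b hab
    by_contra hcon
    push_neg at hcon
    obtain ⟨ha, hb⟩ := hcon
    obtain ⟨n, c, hcu, rfl⟩ := hstruct a ha
    obtain ⟨m, d, hdu, rfl⟩ := hstruct b hb
    have h5 : (mk0 g) ^ (n + m) * (c * d) = 0 := by rw [← hab]; ring
    exact hgpowne (n + m) (((hcu.mul hdu).mul_left_eq_zero).mp h5)
  haveI hdom : IsDomain (Polynomial ℤ_[ℓ] ⧸ Ideal.span {f}) :=
    NoZeroDivisors.to_isDomain _
  have hnf : ¬ IsField (Polynomial ℤ_[ℓ] ⧸ Ideal.span {f}) := by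
    intro hfield
    have hmb := IsLocalRing.isField_iff_maximalIdeal_eq.mp hfield
    apply hℓmkne 1
    rw [pow_one]
    have hmem : mk0 (C (ℓ : ℤ_[ℓ])) ∈ IsLocalRing.maximalIdeal (Polynomial ℤ_[ℓ] ⧸ Ideal.span {f}) := by
      rw [hmaxeq, Ideal.mem_span_singleton]
      have hℓm : mk0 (C (ℓ : ℤ_[ℓ])) ∈ Ideal.span {mk0 g} := by
        rw [← hmg]; exact Ideal.mem_map_of_mem mk0 hCℓI
      rwa [Ideal.mem_span_singleton] at hℓm
    rw [hmb] at hmem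
    simpa using hmem
  refine ⟨hdom, ?_⟩
  have htfae := IsDiscreteValuationRing.TFAE (Polynomial ℤ_[ℓ] ⧸ Ideal.span {f}) hnf
  have hpr : (IsLocalRing.maximalIdeal (Polynomial ℤ_[ℓ] ⧸ Ideal.span {f})).IsPrincipal :=
    ⟨⟨mk0 g, hmaxeq⟩⟩
  exact (htfae.out 4 0).mp hpr
end

section
/- Let R be a commutative Noetherian ring and M a finite (finite cardinality) R-module. Then M is isomorphic to the direct sum over the maximal ideals 𝔭 of R of its localizations M_𝔭, and only finitely many M_𝔭 are nonzero. -/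
open DirectSum

section Aux

variable {R : Type*} [CommRing R] {M : Type*} [AddCommGroup M] [Module R M]

lemma aux_finite_quot [Finite M] : Finite (R ⧸ Module.annihilator R M) := by
  have : Finite (AddMonoid.End M) :=
    Finite.of_injective (fun f => (f : M → M)) (fun f g h => DFunLike.coe_injective h)
  exact Finite.of_injective _ (RingHom.kerLift_injective (Module.toAddMonoidEnd R M))

lemma aux_jacobson_nilpotent [Finite M] :
    ∃ n : ℕ, (Module.annihilator R M).jacobson ^ n ≤ Module.annihilator R M := by
  set I := Module.annihilator R M with hI
  have : Finite (R ⧸ I) := aux_finite_quot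
  have : IsArtinianRing (R ⧸ I) := inferInstance
  obtain ⟨n, hn⟩ := IsArtinianRing.isNilpotent_jacobson_bot (R := R ⧸ I)
  refine ⟨n, ?_⟩
  have hker : RingHom.ker (Ideal.Quotient.mk I) = I := Ideal.mk_ker
  have hmap : Ideal.map (Ideal.Quotient.mk I) I.jacobson = Ideal.jacobson ⊥ := by
    rw [Ideal.map_jacobson_of_surjective Ideal.Quotient.mk_surjective hker.le,
      Ideal.map_quotient_self]
  have hbot : Ideal.map (Ideal.Quotient.mk I) (I.jacobson ^ n) = ⊥ := by
    rw [Ideal.map_pow, hmap, hn]; rfl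
  have := Ideal.map_le_iff_le_comap.mp hbot.le
  rwa [← RingHom.ker_eq_comap_bot, hker] at this

lemma aux_max_finite [Finite M] :
    {𝔭 : MaximalSpectrum R | Module.annihilator R M ≤ 𝔭.asIdeal}.Finite := by
  set I := Module.annihilator R M with hI
  have : Finite (R ⧸ I) := aux_finite_quot
  have : Finite (Ideal (R ⧸ I)) :=
    Finite.of_injective (fun J => (J : Set (R ⧸ I))) SetLike.coe_injective
  apply Set.Finite.of_finite_image (f := fun 𝔭 => Ideal.map (Ideal.Quotient.mk I) 𝔭.asIdeal)
  · exact Set.toFinite _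
  · intro 𝔭 h𝔭 𝔮 h𝔮 h
    have key : ∀ 𝔯 : MaximalSpectrum R, I ≤ 𝔯.asIdeal →
        Ideal.comap (Ideal.Quotient.mk I) (Ideal.map (Ideal.Quotient.mk I) 𝔯.asIdeal)
          = 𝔯.asIdeal := by
      intro 𝔯 h𝔯
      rw [Ideal.comap_map_of_surjective _ Ideal.Quotient.mk_surjective,
        ← RingHom.ker_eq_comap_bot, Ideal.mk_ker, sup_eq_left.mpr h𝔯]
    have := congrArg (Ideal.comap (Ideal.Quotient.mk I)) h
    rw [key 𝔭 h𝔭, key 𝔮 h𝔮] at this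
    exact MaximalSpectrum.ext this

lemma aux_inf_le_prod {ι : Type*} (S : Finset ι) (f : ι → Ideal R) :
    ((S : Set ι).Pairwise fun i j => f i ⊔ f j = ⊤) →
    (⨅ i ∈ S, f i) ≤ ∏ i ∈ S, f i := by
  classical
  induction S using Finset.induction_on with
  | empty => intro _; simp [Ideal.one_eq_top]
  | @insert a s ha ih =>
    intro h
    have hcop : IsCoprime (f a) (∏ i ∈ s, f i) :=
      IsCoprime.prod_right fun i hi =>
        (Ideal.isCoprime_iff_sup_eq).mpr
          (h (Finset.mem_insert_self a s) (Finset.mem_insert_of_mem hi)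
            (fun hh => ha (hh ▸ hi)))
    rw [Finset.prod_insert ha]
    have h1 : (⨅ i ∈ insert a s, f i) = f a ⊓ ⨅ i ∈ s, f i := by
      rw [Finset.iInf_insert]
    rw [h1, ← Ideal.inf_eq_mul_of_isCoprime hcop]
    exact inf_le_inf_left _ (ih (h.mono (Finset.coe_subset.mpr (Finset.subset_insert a s))))


lemma aux_max_sup (𝔭 : Ideal R) [𝔭.IsMaximal] {s : R} (hs : s ∉ 𝔭) :
    𝔭 ⊔ Ideal.span {s} = ⊤ := by
  by_contra h
  exact hs ((Ideal.span_singleton_le_iff_mem 𝔭).mp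
    (le_sup_right.trans_eq (‹𝔭.IsMaximal›.eq_of_le h le_sup_left).symm))

lemma aux_smul_bij [Finite M] (𝔭 : Ideal R) [𝔭.IsMaximal] (n : ℕ) {s : R} (hs : s ∉ 𝔭) :
    Function.Bijective (fun x : Submodule.torsionBySet R M (𝔭 ^ n : Ideal R) => s • x) := by
  have hsup : 𝔭 ^ n ⊔ Ideal.span {s} = ⊤ := Ideal.pow_sup_eq_top (aux_max_sup 𝔭 hs)
  have h1 : (1 : R) ∈ 𝔭 ^ n ⊔ Ideal.span {s} := hsup ▸ Submodule.mem_top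
  obtain ⟨a, ha, c, hc, hac⟩ := Submodule.mem_sup.mp h1
  obtain ⟨t, rfl⟩ := Ideal.mem_span_singleton'.mp hc
  rw [← Finite.injective_iff_bijective]
  intro x y hxy
  have h0 : s • (x - y) = (0 : Submodule.torsionBySet R M (𝔭 ^ n : Ideal R)) := by
    rw [smul_sub, sub_eq_zero]; exact hxy
  have hax : a • (x - y) = (0 : Submodule.torsionBySet R M (𝔭 ^ n : Ideal R)) := by
    apply Subtype.ext
    exact (Submodule.mem_torsionBySet_iff _ _).mp (x - y).2 ⟨a, ha⟩
  have : x - y = (0 : Submodule.torsionBySet R M (𝔭 ^ n : Ideal R)) := by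
    calc x - y = (1 : R) • (x - y) := (one_smul _ _).symm
    _ = (a + t * s) • (x - y) := by rw [hac]
    _ = a • (x - y) + t • (s • (x - y)) := by rw [add_smul, mul_smul]
    _ = 0 := by rw [hax, h0, smul_zero, add_zero]
  exact sub_eq_zero.mp this


lemma aux_extend {ι : Type*} [DecidableEq ι] (S : Finset ι) (L : ι → Type*)
    [∀ i, AddCommGroup (L i)] [∀ i, Module R (L i)]
    (h : ∀ i ∉ S, Subsingleton (L i)) :
    Nonempty ((⨁ i : S, L i.1) ≃ₗ[R] ⨁ i, L i) := by
  let F : (⨁ i : S, L i.1) →ₗ[R] ⨁ i, L i :=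
    DirectSum.toModule R S _ (fun i => DirectSum.lof R ι L i.1)
  let G : (⨁ i, L i) →ₗ[R] ⨁ i : S, L i.1 :=
    DirectSum.toModule R ι _ (fun i =>
      if hi : i ∈ S then DirectSum.lof R S (fun j : S => L j.1) ⟨i, hi⟩ else 0)
  refine ⟨LinearEquiv.ofLinear F G ?_ ?_⟩
  · apply DirectSum.linearMap_ext
    intro i
    ext x
    by_cases hi : i ∈ S
    · simp [F, G, hi]
    · have := h i hi
      have hx : x = 0 := Subsingleton.elim x 0
      simp [hx]
  · apply DirectSum.linearMap_ext
    rintro ⟨i, hi⟩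
    ext x
    simp [F, G, hi]

end Aux

/-- A finite module `M` over a commutative Noetherian ring `R` is isomorphic to the
direct sum of its localizations at the maximal ideals of `R`, and only finitely many
of these localizations are nonzero. -/
theorem stmt14 (R : Type*) [CommRing R] [IsNoetherianRing R]
    (M : Type*) [AddCommGroup M] [Module R M] [Finite M] :
    Nonempty (M ≃ₗ[R]
      ⨁ 𝔭 : MaximalSpectrum R, LocalizedModule 𝔭.asIdeal.primeCompl M) ∧
    {𝔭 : MaximalSpectrum R |
      Nontrivial (LocalizedModule 𝔭.asIdeal.primeCompl M)}.Finite := by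
  classical
  set I := Module.annihilator R M with hI
  obtain ⟨n, hn⟩ := aux_jacobson_nilpotent (R := R) (M := M)
  have hfin := aux_max_finite (R := R) (M := M)
  have hsub : {𝔭 : MaximalSpectrum R | Nontrivial (LocalizedModule 𝔭.asIdeal.primeCompl M)}
      ⊆ {𝔭 : MaximalSpectrum R | I ≤ 𝔭.asIdeal} := by
    intro 𝔭 h𝔭
    by_contra hle
    obtain ⟨r, hrI, hr𝔭⟩ := SetLike.not_le_iff_exists.mp (show ¬ I ≤ 𝔭.asIdeal from hle)
    have : Subsingleton (LocalizedModule 𝔭.asIdeal.primeCompl M) :=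
      LocalizedModule.subsingleton_iff.mpr fun m =>
        ⟨r, hr𝔭, Module.mem_annihilator.mp hrI m⟩
    exact (not_subsingleton_iff_nontrivial.mpr h𝔭) this
  refine ⟨?_, hfin.subset hsub⟩
  set S : Finset (MaximalSpectrum R) := hfin.toFinset with hS
  set p : MaximalSpectrum R → Ideal R := fun 𝔭 => 𝔭.asIdeal ^ n with hp
  have hpair : (S : Set (MaximalSpectrum R)).Pairwise fun i j => p i ⊔ p j = ⊤ := by
    intro i _ j _ hij
    have : i.asIdeal ⊔ j.asIdeal = ⊤ :=
      Ideal.IsMaximal.coprime_of_ne i.isMaximal j.isMaximal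
        (fun hh => hij (MaximalSpectrum.ext hh))
    exact Ideal.sup_pow_eq_top (Ideal.pow_sup_eq_top this)
  have htors : Module.IsTorsionBySet R M ((⨅ i ∈ S, p i : Ideal R) : Set R) := by
    have hle : (⨅ i ∈ S, p i : Ideal R) ≤ I := by
      have h1 : (⨅ i ∈ S, p i : Ideal R) ≤ ∏ i ∈ S, p i := aux_inf_le_prod S p hpair
      have h2 : (∏ i ∈ S, p i) = (∏ i ∈ S, i.asIdeal) ^ n := by
        rw [Finset.prod_pow]
      have h3 : (∏ i ∈ S, i.asIdeal) ≤ I.jacobson := by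
        rw [Ideal.jacobson]
        refine le_sInf fun J hJ => ?_
        have : (⟨J, hJ.2⟩ : MaximalSpectrum R) ∈ S := hfin.mem_toFinset.mpr hJ.1
        exact (Ideal.prod_le_inf.trans (Finset.inf_le this))
      calc (⨅ i ∈ S, p i : Ideal R) ≤ ∏ i ∈ S, p i := h1
        _ = (∏ i ∈ S, i.asIdeal) ^ n := h2
        _ ≤ I.jacobson ^ n := Ideal.pow_right_mono h3 n
        _ ≤ I := hn
    exact fun x a => Module.mem_annihilator.mp (hle a.2) x
  set N : S → Submodule R M := fun i => Submodule.torsionBySet R M (p i.1) with hN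
  have hint : DirectSum.IsInternal N := Submodule.torsionBySet_isInternal hpair htors
  let e : (⨁ i : S, N i) ≃ₗ[R] M :=
    LinearEquiv.ofBijective (DirectSum.coeLinearMap N) hint
  let π : ∀ i : S, M →ₗ[R] N i := fun i =>
    (DirectSum.component R S (fun i : S => N i) i) ∘ₗ e.symm.toLinearMap
  have hπ_apply : ∀ (i : S) (m : M), π i m = e.symm m i := fun i m => rfl
  have hπ_self : ∀ (i : S) (y : N i), π i (y : M) = y := by
    intro i y
    rw [hπ_apply]
    exact hint.ofBijective_coeLinearMap_same y
  have key : ∀ (i : S) (m : M), π i m = 0 → ∃ s ∈ i.1.asIdeal.primeCompl, s • m = 0 := by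
    intro i m hm
    have hcop : IsCoprime (∏ j ∈ S.erase i.1, p j) i.1.asIdeal :=
      IsCoprime.prod_left fun j hj =>
        (Ideal.isCoprime_iff_sup_eq).mpr
          (Ideal.pow_sup_eq_top (Ideal.IsMaximal.coprime_of_ne j.isMaximal i.1.isMaximal
            (fun hh => (Finset.ne_of_mem_erase hj) (MaximalSpectrum.ext hh))))
    have hsup := (Ideal.isCoprime_iff_sup_eq).mp hcop
    have h1 : (1 : R) ∈ (∏ j ∈ S.erase i.1, p j) ⊔ i.1.asIdeal := hsup ▸ Submodule.mem_top
    obtain ⟨s, hsJ, t, ht, hst⟩ := Submodule.mem_sup.mp h1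
    have hs : s ∈ i.1.asIdeal.primeCompl := by
      intro hmem
      exact i.1.isMaximal.ne_top ((Ideal.eq_top_iff_one _).mpr (hst ▸ add_mem hmem ht))
    refine ⟨s, hs, ?_⟩
    have hd : s • (e.symm m) = 0 := by
      refine DFinsupp.ext fun j => ?_
      rw [DirectSum.smul_apply, DirectSum.zero_apply]
      by_cases hji : j = i
      · subst hji
        rw [← hπ_apply, hm, smul_zero]
      · apply Subtype.ext
        have hsj : s ∈ p j.1 := by
          have : j.1 ∈ S.erase i.1 :=
            Finset.mem_erase.mpr ⟨fun hh => hji (Subtype.ext hh), j.2⟩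
          exact (Ideal.prod_le_inf.trans (Finset.inf_le this)) hsJ
        have := (Submodule.mem_torsionBySet_iff (p j.1 : Set R) ((e.symm m) j : M)).mp
          ((e.symm m) j).2 ⟨s, hsj⟩
        simpa using this
    have := congrArg e hd
    rwa [map_smul, e.apply_symm_apply, map_zero] at this
  have hloc : ∀ i : S, IsLocalizedModule i.1.asIdeal.primeCompl (π i) := by
    intro i
    refine ⟨fun s => ?_, fun y => ?_, fun {x₁ x₂} hx => ?_⟩
    · rw [Module.End.isUnit_iff]
      have hb := aux_smul_bij (M := M) i.1.asIdeal n s.2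
      exact hb
    · exact ⟨⟨(y : M), 1⟩, by rw [one_smul]; exact (hπ_self i y).symm⟩
    · obtain ⟨s, hs, h0⟩ := key i (x₁ - x₂) (by rw [map_sub, hx, sub_self])
      exact ⟨⟨s, hs⟩, by
        have : s • x₁ - s • x₂ = 0 := by rw [← smul_sub]; exact h0
        have h2 : s • x₁ = s • x₂ := by rwa [sub_eq_zero] at this
        exact h2⟩
  have hss : ∀ 𝔭 : MaximalSpectrum R, ¬ I ≤ 𝔭.asIdeal →
      Subsingleton (LocalizedModule 𝔭.asIdeal.primeCompl M) := by
    intro 𝔭 hle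
    obtain ⟨r, hrI, hr𝔭⟩ := SetLike.not_le_iff_exists.mp hle
    exact LocalizedModule.subsingleton_iff.mpr fun m =>
      ⟨r, hr𝔭, Module.mem_annihilator.mp hrI m⟩
  have hsubsing : ∀ 𝔭 ∉ S, Subsingleton (LocalizedModule 𝔭.asIdeal.primeCompl M) := by
    intro 𝔭 h𝔭
    exact hss 𝔭 (fun hh => h𝔭 (hfin.mem_toFinset.mpr hh))
  let eq1 : (⨁ i : S, N i) ≃ₗ[R] ⨁ i : S, LocalizedModule i.1.asIdeal.primeCompl M :=
    DFinsupp.mapRange.linearEquiv fun i =>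
      haveI := hloc i
      (IsLocalizedModule.iso i.1.asIdeal.primeCompl (π i)).symm
  obtain ⟨eq2⟩ := aux_extend (R := R) S (fun 𝔭 => LocalizedModule 𝔭.asIdeal.primeCompl M) hsubsing
  exact ⟨(e.symm.trans eq1).trans eq2⟩
end
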